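/- Let p be a prime, H a finite p-group, and M a finite abelian group whose cardinality is a power of p, equipped with an action of H by group automorphisms. Define a descending sequence of subgroups of M by Γ₀ = M and Γ_{k+1} = the subgroup of M generated by the set {h • m - m : h ∈ H, m ∈ Γ_k}. Then there exists n ∈ ℕ such that Γ_n is the trivial subgroup; i.e., the action of H on M is nilpotent. -/
import Mathlib

section Aux

variable (H M : Type*) [Group H] [AddCommGroup M] [DistribMulAction H M]

/-- The fixed points of the action, as an additive subgroup. -/
def fixedAddSubgroup : AddSubgroup M where
  carrier := MulAction.fixedPoints H M
  zero_mem' := fun h => smul_zero h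
  add_mem' := fun {a b} ha hb h => by rw [smul_add, ha h, hb h]
  neg_mem' := fun {a} ha h => by rw [smul_neg, ha h]

/-- The canonical descending series of the action. -/
def gammaSeq : ℕ → AddSubgroup M
  | 0 => ⊤
  | k + 1 => AddSubgroup.closure {x : M | ∃ (h : H) (m : M), m ∈ gammaSeq k ∧ x = h • m - m}

instance quotFixedAction : DistribMulAction H (M ⧸ fixedAddSubgroup H M) where
  smul h := QuotientAddGroup.map _ _ (DistribMulAction.toAddMonoidHom M h)
    (fun m hm => AddSubgroup.mem_comap.mpr (show (h • m) ∈ (fixedAddSubgroup H M) by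
      have : h • m = m := hm h
      rw [this]; exact hm))
  one_smul q := QuotientAddGroup.induction_on q fun m => by
    show QuotientAddGroup.map _ _ _ _ _ = _
    rw [QuotientAddGroup.map_mk]
    simp
  mul_smul g h q := QuotientAddGroup.induction_on q fun m => by
    show QuotientAddGroup.map _ _ _ _ _ =
      QuotientAddGroup.map _ _ _ _ (QuotientAddGroup.map _ _ _ _ _)
    rw [QuotientAddGroup.map_mk, QuotientAddGroup.map_mk, QuotientAddGroup.map_mk]
    simp [mul_smul]
  smul_zero h := by
    show QuotientAddGroup.map _ _ _ _ 0 = 0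
    simp
  smul_add h q r := by
    show QuotientAddGroup.map _ _ _ _ (q + r) = _
    rw [map_add]
    rfl

lemma mk_smul_eq (h : H) (m : M) :
    (QuotientAddGroup.mk (h • m) : M ⧸ fixedAddSubgroup H M) = h • (QuotientAddGroup.mk m) :=
  rfl

variable {H M}

lemma gammaSeq_le_comap {N : Type*} [AddCommGroup N] [DistribMulAction H N]
    (φ : M →+ N) (hφ : ∀ (h : H) (m : M), φ (h • m) = h • φ m) (k : ℕ) :
    gammaSeq H M k ≤ (gammaSeq H N k).comap φ := by
  induction k with
  | zero => exact le_top.trans (by rw [show (⊤ : AddSubgroup M) = _ from rfl]; exact fun x _ => trivial)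
  | succ k ih =>
    show AddSubgroup.closure _ ≤ _
    rw [AddSubgroup.closure_le]
    rintro x ⟨h, m, hm, rfl⟩
    show φ (h • m - m) ∈ gammaSeq H N (k + 1)
    rw [map_sub, hφ]
    exact AddSubgroup.subset_closure ⟨h, φ m, ih hm, rfl⟩

end Aux

theorem gammaSeq_eventually_bot (p : ℕ) (hp : p.Prime)
    (H : Type*) [Group H] [Finite H] (hH : ∃ k : ℕ, Nat.card H = p ^ k) :
    ∀ (n : ℕ) (M : Type*) [AddCommGroup M] [Finite M] [DistribMulAction H M],
      Nat.card M = n → (∃ k : ℕ, Nat.card M = p ^ k) → ∃ m : ℕ, gammaSeq H M m = ⊥ := by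
  intro n
  induction n using Nat.strong_induction_on with
  | _ n IH =>
    intro M _ _ _ hn hM
    rcases subsingleton_or_nontrivial M with hs | hnt
    · refine ⟨0, ?_⟩
      ext x
      simp [Subsingleton.elim x 0, gammaSeq]
    · haveI : Fact p.Prime := ⟨hp⟩
      obtain ⟨kH, hkH⟩ := hH
      have hpg : IsPGroup p H := IsPGroup.of_card hkH
      obtain ⟨k, hk⟩ := hM
      -- p divides card M
      have hone : 1 < Nat.card M := Finite.one_lt_card
      have hk0 : k ≠ 0 := by rintro rfl; simp [hk] at hone
      have hdvd : p ∣ Nat.card M := hk ▸ dvd_pow_self p hk0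
      -- a nonzero fixed point
      obtain ⟨b, hb, hb0⟩ :=
        hpg.exists_fixed_point_of_prime_dvd_card_of_fixed_point (α := M) hdvd
          (a := 0) (fun h => smul_zero h)
      set F : AddSubgroup M := fixedAddSubgroup H M with hF
      -- the quotient is smaller
      have hcard : Nat.card (M ⧸ F) * Nat.card F = Nat.card M :=
        (AddSubgroup.card_eq_card_quotient_mul_card_addSubgroup F).symm
      have hFnt : 1 < Nat.card F := by
        have : Nontrivial F := ⟨⟨⟨0, fun h => smul_zero h⟩, ⟨b, hb⟩, fun e => hb0 (congrArg Subtype.val e)⟩⟩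
        exact Finite.one_lt_card
      have hQlt : Nat.card (M ⧸ F) < n := by
        rw [← hn, ← hcard]
        have hQpos : 0 < Nat.card (M ⧸ F) := Nat.card_pos
        exact (Nat.lt_mul_iff_one_lt_right hQpos).mpr hFnt
      have hQdvd : Nat.card (M ⧸ F) ∣ Nat.card M := ⟨Nat.card F, hcard.symm⟩
      obtain ⟨j, _, hj⟩ := (Nat.dvd_prime_pow hp).mp (hk ▸ hQdvd)
      obtain ⟨m, hm⟩ := IH _ hQlt (M ⧸ F) rfl ⟨j, hj⟩
      -- gammaSeq on M maps into gammaSeq on the quotient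
      have hcomap := gammaSeq_le_comap (H := H)
        (QuotientAddGroup.mk' F)
        (fun h m => mk_smul_eq H M h m) m
      rw [hm] at hcomap
      -- so gammaSeq H M m consists of fixed points
      have hfix : ∀ x ∈ gammaSeq H M m, ∀ h : H, h • x = x := by
        intro x hx h
        have : (QuotientAddGroup.mk' F) x = 0 := hcomap hx
        have : x ∈ F := (QuotientAddGroup.eq_zero_iff x).mp this
        exact this h
      refine ⟨m + 1, ?_⟩
      rw [← le_bot_iff]
      show AddSubgroup.closure _ ≤ ⊥
      rw [AddSubgroup.closure_le]
      rintro x ⟨h, y, hy, rfl⟩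
      simp [hfix y hy h]

/-- Let `p` be a prime, `H` a finite `p`-group, and `M` a finite abelian
group whose cardinality is a power of `p`, equipped with an action of `H` by group
automorphisms.  Define `Γ 0 = M` and `Γ (k+1) = ⟨{h • m - m : h ∈ H, m ∈ Γ k}⟩`.
Then some `Γ n` is trivial, i.e. the action of `H` on `M` is nilpotent. -/
theorem sylow_infinity_stmt0 (p : ℕ) (hp : p.Prime)
    (H : Type*) [Group H] [Finite H] (hH : ∃ k : ℕ, Nat.card H = p ^ k)
    (M : Type*) [AddCommGroup M] [Finite M] (hM : ∃ k : ℕ, Nat.card M = p ^ k)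
    [DistribMulAction H M]
    (Γ : ℕ → AddSubgroup M)
    (hΓ0 : Γ 0 = ⊤)
    (hΓ : ∀ k : ℕ, Γ (k + 1) =
      AddSubgroup.closure {x : M | ∃ (h : H) (m : M), m ∈ Γ k ∧ x = h • m - m}) :
    ∃ n : ℕ, Γ n = ⊥ := by
  have hEq : ∀ k, Γ k = gammaSeq H M k := by
    intro k
    induction k with
    | zero => exact hΓ0
    | succ k ih => rw [hΓ k, ih]; rfl
  obtain ⟨n, hn⟩ := gammaSeq_eventually_bot p hp H hH (Nat.card M) M rfl hM
  exact ⟨n, (hEq n).trans hn⟩
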